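/- For every positive integer n, there exists a family of sets A_1, A_2, ..., A_{n+1}, each a subset of the integer interval {1, 2, ..., n(n+1)/2}, such that every set A_i has exactly n elements, any two distinct sets A_i and A_j share exactly one element, and each element of {1, ..., n(n+1)/2} belongs to exactly two of the sets. -/
import Mathlib

namespace Stmt1

def T (k : ℕ) : ℕ := k * (k - 1) / 2

lemma T_succ (k : ℕ) : T (k + 1) = T k + k := by
  unfold T
  have h : (k + 1) * ((k + 1) - 1) = k * (k - 1) + k * 2 := by
    cases k with
    | zero => rfl
    | succ m => simp [Nat.succ_sub_one]; ring
  rw [h, Nat.add_mul_div_right _ _ (by norm_num : (0:ℕ) < 2)]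

lemma T_mono : Monotone T := fun a b h =>
  Nat.div_le_div_right (Nat.mul_le_mul h (by omega))

lemma enc_le {i j n : ℕ} (hij : i < j) (hjn : j ≤ n) :
    T j + i + 1 ≤ T (n + 1) := by
  have h1 : T j + i + 1 ≤ T (j + 1) := by have := T_succ j; omega
  exact h1.trans (T_mono (by omega))

lemma enc_inj {i j i' j' : ℕ} (h : i < j) (h' : i' < j')
    (he : T j + i + 1 = T j' + i' + 1) : i = i' ∧ j = j' := by
  have key : ∀ a b a' b' : ℕ, a < b → a' < b' → b < b' →
      T b + a + 1 ≠ T b' + a' + 1 := by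
    intro a b a' b' hab ha'b' hbb' hcon
    have h1 : T b + a + 1 ≤ T (b + 1) := by have := T_succ b; omega
    have h2 : T (b + 1) ≤ T b' := T_mono (by omega)
    omega
  have hjj' : j = j' := by
    rcases lt_trichotomy j j' with hl | heq | hl
    · exact absurd he (key i j i' j' h h' hl)
    · exact heq
    · exact absurd he.symm (key i' j' i j h' h hl)
  subst hjj'
  exact ⟨by omega, rfl⟩

lemma decomp (m : ℕ) : ∀ x, 1 ≤ x → x ≤ T (m + 1) →
    ∃ i j, i < j ∧ j ≤ m ∧ x = T j + i + 1 := by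
  induction m with
  | zero => intro x h1 h2; simp [T] at h2; omega
  | succ m ih =>
    intro x h1 h2
    by_cases h : x ≤ T (m + 1)
    · obtain ⟨i, j, hij, hjm, hx⟩ := ih x h1 h
      exact ⟨i, j, hij, by omega, hx⟩
    · refine ⟨x - T (m + 1) - 1, m + 1, ?_, le_refl _, ?_⟩ <;>
      · have := T_succ (m + 1); omega

end Stmt1

open Stmt1 in
/-- For every positive integer `n`, there is a family of sets `A 1, ..., A (n+1)`,
each a subset of `{1, ..., n(n+1)/2}`, such that every set has exactly `n` elements,
any two distinct sets share exactly one element, and each element of the interval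
belongs to exactly two of the sets. -/
theorem stmt_1 (n : ℕ) (hn : 0 < n) :
    ∃ A : Fin (n + 1) → Finset ℕ,
      (∀ i, A i ⊆ Finset.Icc 1 (n * (n + 1) / 2)) ∧
      (∀ i, (A i).card = n) ∧
      (∀ i j, i ≠ j → (A i ∩ A j).card = 1) ∧
      (∀ x ∈ Finset.Icc 1 (n * (n + 1) / 2),
        (Finset.univ.filter fun i => x ∈ A i).card = 2) := by
  classical
  have hTN : T (n + 1) = n * (n + 1) / 2 := by
    unfold T; rw [Nat.add_sub_cancel, Nat.mul_comm]
  set A : Fin (n + 1) → Finset ℕ := fun i =>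
    ((Finset.range (n + 1)).erase i.val).image
      (fun j => T (max i.val j) + min i.val j + 1) with hA
  have hmem : ∀ (i : Fin (n + 1)) (x : ℕ), x ∈ A i ↔
      ∃ a, a ≠ i.val ∧ a ≤ n ∧ x = T (max i.val a) + min i.val a + 1 := by
    intro i x
    simp only [hA, Finset.mem_image, Finset.mem_erase, Finset.mem_range]
    constructor
    · rintro ⟨a, ⟨h1, h2⟩, h3⟩; exact ⟨a, h1, by omega, h3.symm⟩
    · rintro ⟨a, h1, h2, h3⟩; exact ⟨a, ⟨h1, by omega⟩, h3.symm⟩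
  refine ⟨A, ?_, ?_, ?_, ?_⟩
  · intro i x hx
    obtain ⟨a, h1, h2, h3⟩ := (hmem i x).1 hx
    have hmm : min i.val a < max i.val a := by omega
    have hmx : max i.val a ≤ n := by have := i.isLt; omega
    rw [Finset.mem_Icc]
    have := enc_le hmm hmx
    omega
  · intro i
    have hinj : Set.InjOn (fun j => T (max i.val j) + min i.val j + 1)
        ((Finset.range (n + 1)).erase i.val) := by
      intro a ha b hb hab
      simp only [Finset.coe_erase, Set.mem_diff, Finset.coe_range,
        Set.mem_Iio, Set.mem_singleton_iff] at ha hb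
      have h1 : min i.val a < max i.val a := by omega
      have h2 : min i.val b < max i.val b := by omega
      obtain ⟨e1, e2⟩ := enc_inj h1 h2 hab
      omega
    rw [hA]
    rw [Finset.card_image_of_injOn hinj, Finset.card_erase_of_mem
      (Finset.mem_range.2 i.isLt), Finset.card_range]
    omega
  · intro i j hij
    have hvij : i.val ≠ j.val := fun h => hij (Fin.ext h)
    have heq : A i ∩ A j = {T (max i.val j.val) + min i.val j.val + 1} := by
      apply Finset.Subset.antisymm
      · intro x hx
        rw [Finset.mem_inter] at hx
        obtain ⟨a, ha1, ha2, ha3⟩ := (hmem i x).1 hx.1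
        obtain ⟨b, hb1, hb2, hb3⟩ := (hmem j x).1 hx.2
        have h1 : min i.val a < max i.val a := by omega
        have h2 : min j.val b < max j.val b := by omega
        obtain ⟨e1, e2⟩ := enc_inj h1 h2 (ha3.symm.trans hb3)
        rw [Finset.mem_singleton]
        have hab : a = j.val ∧ b = i.val := by omega
        rw [ha3, hab.1]
      · rw [Finset.singleton_subset_iff, Finset.mem_inter]
        constructor
        · exact (hmem i _).2 ⟨j.val, hvij.symm, by have := j.isLt; omega, rfl⟩
        · refine (hmem j _).2 ⟨i.val, hvij, by have := i.isLt; omega, ?_⟩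
          rw [Nat.max_comm, Nat.min_comm]
    rw [heq, Finset.card_singleton]
  · intro x hx
    rw [Finset.mem_Icc] at hx
    obtain ⟨i, j, hij, hjn, hxe⟩ := decomp n x hx.1 (by rw [hTN]; exact hx.2)
    have hIlt : i < n + 1 := by omega
    have hJlt : j < n + 1 := by omega
    set I : Fin (n + 1) := ⟨i, hIlt⟩
    set J : Fin (n + 1) := ⟨j, hJlt⟩
    have hIJ : I ≠ J := by
      intro h
      have : i = j := congrArg Fin.val h
      omega
    have hfilt : Finset.univ.filter (fun k => x ∈ A k) = {I, J} := by
      ext k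
      simp only [Finset.mem_filter, Finset.mem_univ, true_and,
        Finset.mem_insert, Finset.mem_singleton]
      constructor
      · intro hk
        obtain ⟨a, ha1, ha2, ha3⟩ := (hmem k x).1 hk
        have h1 : min k.val a < max k.val a := by omega
        obtain ⟨e1, e2⟩ := enc_inj h1 hij (ha3.symm.trans hxe)
        have : k.val = i ∨ k.val = j := by omega
        rcases this with h | h
        · exact Or.inl (Fin.ext h)
        · exact Or.inr (Fin.ext h)
      · rintro (rfl | rfl)
        · refine (hmem I x).2 ⟨j, by simp only [I]; omega, hjn, ?_⟩
          show x = T (max i j) + min i j + 1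
          rw [Nat.max_eq_right hij.le, Nat.min_eq_left hij.le, hxe]
        · refine (hmem J x).2 ⟨i, by simp only [J]; omega, by omega, ?_⟩
          show x = T (max j i) + min j i + 1
          rw [Nat.max_eq_left hij.le, Nat.min_eq_right hij.le, hxe]
    rw [hfilt, Finset.card_pair hIJ]
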